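/- Let 𝒦 be a symmetric invertible real N×N matrix, 𝒦_{*X} ∈ ℝ^{1×N}, 𝒦_{**} ∈ ℝ, Y ∈ ℝ^N, η > 0, t ≥ 0. Let (f₀(x*), f₀(𝒳)) ∈ ℝ × ℝ^N be a centered random vector with square-integrable coordinates such that Var(f₀(x*)) = 𝒦_{**}, Cov(f₀(x*), f₀(𝒳)) = 𝒦_{*X}, and Cov(f₀(𝒳), f₀(𝒳)) = 𝒦. Define f_t(x*) = f₀(x*) + 𝒦_{*X} 𝒦⁻¹ (exp(−η 𝒦 t) − I)(f₀(𝒳) − Y). Then E[f_t(x*)] = 𝒦_{*X} 𝒦⁻¹ (I − exp(−η 𝒦 t)) Y and Var(f_t(x*)) = 𝒦_{**} − 𝒦_{*X} 𝒦⁻¹ (I − exp(−2η 𝒦 t)) 𝒦_{*X}ᵀ. -/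

import Mathlib

/-!
Write `A = 𝒦⁻¹ (exp(−η𝒦t) − I)` and `w = 𝒦_{*X} A`. Then `f_t(x*) = f₀(x*) + w · f₀(𝒳) − w · Y`,
whose centered part is a linear combination of the centered initial outputs. Its mean is `−w · Y`,
and its variance is `𝒦_{**} + 𝒦_{*X} (2A + A 𝒦 Aᵀ) 𝒦_{*X}ᵀ`. Since `𝒦`, its inverse and
`E = exp(−η𝒦t)` are symmetric and commute, `2A + A 𝒦 Aᵀ = 𝒦⁻¹ (2(E − I) + (E − I)²) = 𝒦⁻¹ (E² − I)`,
and `E² = exp(−2η𝒦t)`.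
-/

open Matrix MeasureTheory

section Moments

variable {Ω ι : Type*} [MeasurableSpace Ω] {μ : Measure Ω} [Fintype ι]

theorem memLp_dotProduct {p : ENNReal} (w : ι → ℝ) {X : Ω → ι → ℝ}
    (hX : ∀ i, MemLp (fun ω => X ω i) p μ) : MemLp (fun ω => w ⬝ᵥ X ω) p μ := by
  simpa only [dotProduct] using memLp_finsetSum Finset.univ fun i _ => (hX i).const_mul (w i)

theorem integral_dotProduct (w : ι → ℝ) {X : Ω → ι → ℝ}
    (hX : ∀ i, Integrable (fun ω => X ω i) μ) :
    ∫ ω, w ⬝ᵥ X ω ∂μ = w ⬝ᵥ fun i => ∫ ω, X ω i ∂μ := by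
  simp only [dotProduct]
  rw [integral_finsetSum _ fun i _ => (hX i).const_mul (w i)]
  simp only [integral_const_mul]

theorem integral_mul_dotProduct (g : Ω → ℝ) (w : ι → ℝ) {X : Ω → ι → ℝ}
    (hX : ∀ i, Integrable (fun ω => g ω * X ω i) μ) :
    ∫ ω, g ω * (w ⬝ᵥ X ω) ∂μ = w ⬝ᵥ fun i => ∫ ω, g ω * X ω i ∂μ := by
  simp only [← smul_eq_mul (a := g _), ← dotProduct_smul]
  exact integral_dotProduct w hX

theorem integral_add_dotProduct_sq {g : Ω → ℝ} {X : Ω → ι → ℝ} (w : ι → ℝ)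
    {s : ℝ} {c : ι → ℝ} {C : Matrix ι ι ℝ}
    (hg : MemLp g 2 μ) (hX : ∀ i, MemLp (fun ω => X ω i) 2 μ)
    (hs : ∫ ω, g ω ^ 2 ∂μ = s) (hc : ∀ i, ∫ ω, g ω * X ω i ∂μ = c i)
    (hC : ∀ i j, ∫ ω, X ω i * X ω j ∂μ = C i j) :
    ∫ ω, (g ω + w ⬝ᵥ X ω) ^ 2 ∂μ = s + 2 * (w ⬝ᵥ c) + w ⬝ᵥ C *ᵥ w := by
  have hS := memLp_dotProduct w hX
  have hgS : ∫ ω, g ω * (w ⬝ᵥ X ω) ∂μ = w ⬝ᵥ c := by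
    rw [integral_mul_dotProduct g w fun i => hg.integrable_mul (hX i)]
    exact congrArg _ (funext hc)
  have hSS : ∫ ω, (w ⬝ᵥ X ω) * (w ⬝ᵥ X ω) ∂μ = w ⬝ᵥ C *ᵥ w := by
    rw [integral_mul_dotProduct _ w fun i => hS.integrable_mul (hX i)]
    congr 1
    funext j
    simp only [mul_comm (w ⬝ᵥ X _)]
    rw [integral_mul_dotProduct _ w fun i => (hX j).integrable_mul (hX i), dotProduct_comm]
    exact congrArg (· ⬝ᵥ w) (funext (hC j))
  have hgS_int : Integrable (fun ω => g ω * (w ⬝ᵥ X ω)) μ := hg.integrable_mul hS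
  have hSS_int : Integrable (fun ω => (w ⬝ᵥ X ω) * (w ⬝ᵥ X ω)) μ := hS.integrable_mul hS
  have hcross_int : Integrable (fun ω => 2 * (g ω * (w ⬝ᵥ X ω)) + (w ⬝ᵥ X ω) * (w ⬝ᵥ X ω)) μ :=
    (hgS_int.const_mul 2).add hSS_int
  have hexpand : (fun ω => (g ω + w ⬝ᵥ X ω) ^ 2) = fun ω =>
      g ω ^ 2 + (2 * (g ω * (w ⬝ᵥ X ω)) + (w ⬝ᵥ X ω) * (w ⬝ᵥ X ω)) := by
    funext ω; ring
  rw [hexpand, integral_add hg.integrable_sq hcross_int,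
    integral_add (hgS_int.const_mul 2) hSS_int,
    integral_const_mul, hs, hgS, hSS, add_assoc]

end Moments

namespace Matrix

variable {n R : Type*} [Fintype n] [CommRing R]

theorem dotProduct_two_smul_add_mul_mul_transpose_mulVec (v : n → R) (A K : Matrix n n R) :
    v ⬝ᵥ ((2 : R) • A + A * K * Aᵀ) *ᵥ v =
      2 * ((v ᵥ* A) ⬝ᵥ v) + (v ᵥ* A) ⬝ᵥ K *ᵥ (v ᵥ* A) := by
  rw [add_mulVec, dotProduct_add, smul_mulVec, dotProduct_smul, smul_eq_mul, dotProduct_mulVec,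
    ← mulVec_mulVec, ← mulVec_mulVec, dotProduct_mulVec, mulVec_transpose]

variable [DecidableEq n]

theorem two_smul_add_mul_mul_transpose_of_commute {K E : Matrix n n R} (hK : K.IsSymm)
    (hE : E.IsSymm) (hKE : Commute K E) (hdet : IsUnit K.det) :
    (2 : R) • (K⁻¹ * (E - 1)) + K⁻¹ * (E - 1) * K * (K⁻¹ * (E - 1))ᵀ = K⁻¹ * (E * E - 1) := by
  have htranspose : (K⁻¹ * (E - 1))ᵀ = (E - 1) * K⁻¹ := by
    rw [transpose_mul, transpose_sub, transpose_one, hE.eq, transpose_nonsing_inv, hK.eq]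
  have hcomm : (E - 1) * K = K * (E - 1) := (hKE.sub_right (Commute.one_right K)).eq.symm
  calc (2 : R) • (K⁻¹ * (E - 1)) + K⁻¹ * (E - 1) * K * (K⁻¹ * (E - 1))ᵀ
      = (2 : R) • (K⁻¹ * (E - 1)) + K⁻¹ * (E - 1) * (E - 1) * (K * K⁻¹) := by
        simp only [htranspose, Matrix.mul_assoc]
        rw [← Matrix.mul_assoc K, ← hcomm, Matrix.mul_assoc]
    _ = K⁻¹ * (E * E - 1) := by
        rw [mul_nonsing_inv K hdet, Matrix.mul_one, two_smul]
        noncomm_ring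

end Matrix

theorem readout_layer_prediction_mean_and_variance {N : ℕ}
    (K : Matrix (Fin N) (Fin N) ℝ) (hKsym : K.IsSymm) (hKinv : IsUnit K)
    (kx : Fin N → ℝ) (Kss : ℝ) (Y : Fin N → ℝ)
    (η t : ℝ)
    {Ω : Type*} [MeasurableSpace Ω] (μ : Measure Ω) [IsProbabilityMeasure μ]
    (fs : Ω → ℝ) (fX : Ω → (Fin N → ℝ))
    (hfs2 : MemLp fs 2 μ) (hfX2 : ∀ i, MemLp (fun ω => fX ω i) 2 μ)
    (hfsmean : ∫ ω, fs ω ∂μ = 0) (hfXmean : ∀ i, ∫ ω, fX ω i ∂μ = 0)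
    (hvar : ∫ ω, fs ω ^ 2 ∂μ = Kss)
    (hcross : ∀ j, ∫ ω, fs ω * fX ω j ∂μ = kx j)
    (hcov : ∀ i j, ∫ ω, fX ω i * fX ω j ∂μ = K i j)
    (f : Ω → ℝ)
    (hf : ∀ ω, f ω = fs ω +
      kx ⬝ᵥ (K⁻¹.mulVec ((NormedSpace.exp (-(η * t) • K) - 1).mulVec (fX ω - Y)))) :
    (∫ ω, f ω ∂μ =
      kx ⬝ᵥ (K⁻¹.mulVec ((1 - NormedSpace.exp (-(η * t) • K)).mulVec Y))) ∧
    (∫ ω, (f ω - ∫ ω', f ω' ∂μ) ^ 2 ∂μ =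
      Kss - kx ⬝ᵥ (K⁻¹.mulVec
        ((1 - NormedSpace.exp (-(2 * η * t) • K)).mulVec kx))) := by
  set E := NormedSpace.exp (-(η * t) • K)
  set w := kx ᵥ* (K⁻¹ * (E - 1))
  have hf_affine : ∀ ω, f ω = fs ω + w ⬝ᵥ fX ω - w ⬝ᵥ Y := fun ω => by
    rw [hf, mulVec_mulVec, dotProduct_mulVec, dotProduct_sub, add_sub_assoc]
  have hfs_int := hfs2.integrable one_le_two
  have hS_int := (memLp_dotProduct w hfX2).integrable one_le_two
  have hsum_int : Integrable (fun ω => fs ω + w ⬝ᵥ fX ω) μ := hfs_int.add hS_int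
  have hS_mean : ∫ ω, w ⬝ᵥ fX ω ∂μ = 0 := by
    rw [integral_dotProduct w fun i => (hfX2 i).integrable one_le_two, funext hfXmean]
    exact dotProduct_zero w
  have hmean : ∫ ω, f ω ∂μ = -(w ⬝ᵥ Y) := by
    simp only [hf_affine]
    rw [integral_sub hsum_int (integrable_const _), integral_add hfs_int hS_int,
      hfsmean, hS_mean, integral_const, probReal_univ, one_smul, zero_add, zero_sub]
  have hE_sq : NormedSpace.exp (-(2 * η * t) • K) = E * E := by
    rw [show -(2 * η * t) = -(η * t) + -(η * t) by ring, add_smul,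
      exp_add_of_commute _ _ (Commute.refl _)]
  refine ⟨?_, ?_⟩
  · rw [hmean, mulVec_mulVec, dotProduct_mulVec, ← neg_sub E 1, Matrix.mul_neg, vecMul_neg,
      neg_dotProduct]
  · have hcentered : ∀ ω, f ω - ∫ ω', f ω' ∂μ = fs ω + w ⬝ᵥ fX ω := fun ω => by
      rw [hf_affine, hmean]; ring
    simp only [hcentered]
    rw [integral_add_dotProduct_sq w hfs2 hfX2 hvar hcross hcov, add_assoc,
      ← dotProduct_two_smul_add_mul_mul_transpose_mulVec,
      two_smul_add_mul_mul_transpose_of_commute hKsym (hKsym.smul _).exp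
        ((Commute.refl K).smul_right _).exp_right ((isUnit_iff_isUnit_det K).mp hKinv),
      hE_sq, mulVec_mulVec, ← neg_sub (E * E) 1, Matrix.mul_neg, neg_mulVec, dotProduct_neg,
      sub_neg_eq_add]
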